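/- Let δ > 0, c > 0, and let l_j : ℝ² → [0,∞), j = 1,…,n, be measurable with Σ_j ∫_{|y'|<δ} e^{-2τ l_j(y')} dy' ≥ c₀ τ^{-2} for τ ≥ 1. Then for 4/3 < p < 2 and τ large, (Σ_j ∫_{|y'|<δ} e^{-pτ l_j} dy')^{2/p} · τ^{2(p−1)/p} / (τ · Σ_j ∫_{|y'|<δ} e^{-2τ l_j} dy') ≤ C τ^{1−2/p}, ignoring exponentially small corrections; i.e., ‖curl H₀‖²_{L^p(D)} / ‖curl H₀‖²_{L²(D)} ≤ C τ^{1−2/p} for τ ≫ 1 when ∂D is Lipschitz. -/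

import Mathlib

/-!
On the ball `B = {‖y‖ < δ}`, Hölder's inequality against the constant function gives
`∫_B e^{-pτl} ≤ (∫_B e^{-2τl})^{p/2} |B|^{1-p/2}`, so `(Σ_j ∫ e^{-pτ l_j})^{2/p} ≤ C Σ_j ∫ e^{-2τ l_j}`
with `C` independent of `τ`. The two sums then cancel in the ratio, leaving the power
`τ^{2(p-1)/p - 1} = τ^{1-2/p}`.
-/

open MeasureTheory

namespace MeasureTheory

variable {α : Type*} [MeasurableSpace α] {μ : Measure α} [IsFiniteMeasure μ] {r s : ℝ}

theorem integral_le_integral_rpow_mul_measureReal_univ (hrs : r.HolderConjugate s) {f : α → ℝ}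
    (hf_nonneg : 0 ≤ᵐ[μ] f) (hf : MemLp f (ENNReal.ofReal r) μ) :
    ∫ a, f a ∂μ ≤ (∫ a, f a ^ r ∂μ) ^ (1 / r) * μ.real Set.univ ^ (1 / s) := by
  have h := integral_mul_le_Lp_mul_Lq_of_nonneg hrs hf_nonneg
    (Filter.Eventually.of_forall fun _ => zero_le_one) hf (memLp_const (1 : ℝ))
  simpa only [mul_one, Real.one_rpow, integral_const, smul_eq_mul] using h

theorem sum_integral_rpow_le_mul_sum_integral_rpow {ι : Type*} (t : Finset ι)
    (hrs : r.HolderConjugate s) {f : ι → α → ℝ} (hf_nonneg : ∀ i, 0 ≤ᵐ[μ] f i)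
    (hf : ∀ i, MemLp (f i) (ENNReal.ofReal r) μ) :
    (∑ i ∈ t, ∫ a, f i a ∂μ) ^ r ≤
      (t.card * μ.real Set.univ ^ (1 / s)) ^ r * ∑ i ∈ t, ∫ a, f i a ^ r ∂μ := by
  set T := ∑ i ∈ t, ∫ a, f i a ^ r ∂μ
  set M := μ.real Set.univ ^ (1 / s)
  have hM : 0 ≤ M := by positivity
  have hpow_nonneg : ∀ i, 0 ≤ ∫ a, f i a ^ r ∂μ := fun i =>
    integral_nonneg_of_ae <| (hf_nonneg i).mono fun a ha => Real.rpow_nonneg ha r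
  have hT : 0 ≤ T := Finset.sum_nonneg fun i _ => hpow_nonneg i
  have hsum : ∑ i ∈ t, ∫ a, f i a ∂μ ≤ t.card * M * T ^ (1 / r) := calc
    ∑ i ∈ t, ∫ a, f i a ∂μ ≤ ∑ i ∈ t, (∫ a, f i a ^ r ∂μ) ^ (1 / r) * M :=
      Finset.sum_le_sum fun i _ =>
        integral_le_integral_rpow_mul_measureReal_univ hrs (hf_nonneg i) (hf i)
    _ ≤ ∑ _i ∈ t, T ^ (1 / r) * M := by
      gcongr with i hi
      · exact hpow_nonneg i
      · exact one_div_nonneg.2 hrs.nonneg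
      · exact Finset.single_le_sum (fun j _ => hpow_nonneg j) hi
    _ = t.card * M * T ^ (1 / r) := by rw [Finset.sum_const, nsmul_eq_mul]; ring
  have hlhs : 0 ≤ ∑ i ∈ t, ∫ a, f i a ∂μ :=
    Finset.sum_nonneg fun i _ => integral_nonneg_of_ae (hf_nonneg i)
  calc (∑ i ∈ t, ∫ a, f i a ∂μ) ^ r ≤ (t.card * M * T ^ (1 / r)) ^ r :=
        Real.rpow_le_rpow hlhs hsum hrs.nonneg
    _ = (t.card * M) ^ r * T := by
      rw [Real.mul_rpow (by positivity) (by positivity), ← Real.rpow_mul hT,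
        one_div_mul_cancel hrs.ne_zero, Real.rpow_one]

end MeasureTheory

theorem mul_rpow_div_mul_le_of_le_mul {X B K τ a : ℝ} (hτ : 0 < τ) (hK : 0 ≤ K) (hB : 0 ≤ B)
    (hX : X ≤ K * B) : X * τ ^ a / (τ * B) ≤ K * τ ^ (a - 1) := by
  rcases hB.eq_or_lt with rfl | hB
  · simp only [mul_zero, div_zero]; positivity
  calc X * τ ^ a / (τ * B) ≤ K * B * τ ^ a / (τ * B) := by gcongr
    _ = K * τ ^ (a - 1) := by
      rw [Real.rpow_sub_one hτ.ne']; field_simp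

theorem stmt18_general
    (n : ℕ) (δ : ℝ)
    (l : Fin n → EuclideanSpace ℝ (Fin 2) → ℝ)
    (hlmeas : ∀ j, Measurable (l j))
    (hlnonneg : ∀ j y, 0 ≤ l j y)
    (p : ℝ) (hp1 : 4 / 3 < p) (hp2 : p < 2) :
    ∃ C τ₀ : ℝ, 0 < C ∧ 1 ≤ τ₀ ∧
      ∀ τ : ℝ, τ₀ ≤ τ →
        ((∑ j, ∫ y in {y : EuclideanSpace ℝ (Fin 2) | ‖y‖ < δ},
            Real.exp (-p * τ * l j y)) ^ (2 / p) * τ ^ (2 * (p - 1) / p)) /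
          (τ * ∑ j, ∫ y in {y : EuclideanSpace ℝ (Fin 2) | ‖y‖ < δ},
            Real.exp (-2 * τ * l j y)) ≤
          C * τ ^ (1 - 2 / p) := by
  have hp : 0 < p := by linarith
  set μ := volume.restrict {y : EuclideanSpace ℝ (Fin 2) | ‖y‖ < δ}
  have : IsFiniteMeasure μ := by
    refine isFiniteMeasure_restrict.2 (ne_of_lt ?_)
    simpa only [← mem_ball_zero_iff, Set.ofPred_mem_eq] using measure_ball_lt_top
  have hrs : (2 / p).HolderConjugate (2 / (2 - p)) := by
    rw [Real.holderConjugate_iff, lt_div_iff₀ hp]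
    exact ⟨by linarith, by field_simp; ring⟩
  set K := ((n : ℝ) * μ.real Set.univ ^ (1 / (2 / (2 - p)))) ^ (2 / p)
  have hK : 0 ≤ K := by positivity
  refine ⟨K + 1, 1, by linarith, le_rfl, fun τ hτ => ?_⟩
  have hτ : 0 < τ := by linarith
  have hexp_le_one : ∀ j y, Real.exp (-p * τ * l j y) ≤ 1 := fun j y => by
    rw [Real.exp_le_one_iff, neg_mul, neg_mul, neg_nonpos]
    exact mul_nonneg (mul_pos hp hτ).le (hlnonneg j y)
  have hmemLp : ∀ j, MemLp (fun y => Real.exp (-p * τ * l j y)) (ENNReal.ofReal (2 / p)) μ :=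
    fun j => MemLp.of_bound (by fun_prop) 1 <| Filter.Eventually.of_forall fun y => by
      rw [Real.norm_of_nonneg (Real.exp_pos _).le]; exact hexp_le_one j y
  have hholder := sum_integral_rpow_le_mul_sum_integral_rpow Finset.univ hrs
    (fun j => Filter.Eventually.of_forall fun y => (Real.exp_pos (-p * τ * l j y)).le) hmemLp
  have hpow : ∀ j y, Real.exp (-p * τ * l j y) ^ (2 / p) = Real.exp (-2 * τ * l j y) :=
    fun j y => by rw [← Real.exp_mul]; congr 1; field_simp
  simp only [hpow, Finset.card_univ, Fintype.card_fin] at hholder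
  have hB : 0 ≤ ∑ j, ∫ y, Real.exp (-2 * τ * l j y) ∂μ :=
    Finset.sum_nonneg fun j _ => integral_nonneg fun y => (Real.exp_pos _).le
  have hratio := mul_rpow_div_mul_le_of_le_mul (K := K + 1) (a := 2 * (p - 1) / p) hτ
    (by positivity) hB
    (hholder.trans (by gcongr; exact le_add_of_nonneg_right zero_le_one))
  rwa [show 2 * (p - 1) / p - 1 = 1 - 2 / p by field_simp; ring] at hratio

/-- Ratio estimate for the `L^p` versus `L²` norms of `curl H₀` in terms of the
boundary parametrizations `l_j`: if the main term satisfies the polynomial lower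
bound `Σ_j ∫_{|y'|<δ} e^{-2τ l_j} ≥ c₀ τ⁻²`, then for `4/3 < p < 2` and `τ` large,
`(Σ_j ∫ e^{-pτ l_j})^{2/p} τ^{2(p−1)/p} / (τ Σ_j ∫ e^{-2τ l_j}) ≤ C τ^{1−2/p}`. -/
theorem stmt18
    (n : ℕ) (δ c₀ : ℝ) (hδ : 0 < δ) (hc₀ : 0 < c₀)
    (l : Fin n → EuclideanSpace ℝ (Fin 2) → ℝ)
    (hlmeas : ∀ j, Measurable (l j))
    (hlnonneg : ∀ j y, 0 ≤ l j y)
    (hmain : ∀ τ : ℝ, 1 ≤ τ →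
      c₀ * τ ^ (-2 : ℤ) ≤
        ∑ j, ∫ y in {y : EuclideanSpace ℝ (Fin 2) | ‖y‖ < δ},
          Real.exp (-2 * τ * l j y))
    (p : ℝ) (hp1 : 4 / 3 < p) (hp2 : p < 2) :
    ∃ C τ₀ : ℝ, 0 < C ∧ 1 ≤ τ₀ ∧
      ∀ τ : ℝ, τ₀ ≤ τ →
        ((∑ j, ∫ y in {y : EuclideanSpace ℝ (Fin 2) | ‖y‖ < δ},
            Real.exp (-p * τ * l j y)) ^ (2 / p) * τ ^ (2 * (p - 1) / p)) /
          (τ * ∑ j, ∫ y in {y : EuclideanSpace ℝ (Fin 2) | ‖y‖ < δ},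
            Real.exp (-2 * τ * l j y)) ≤
          C * τ ^ (1 - 2 / p) :=
  stmt18_general n δ l hlmeas hlnonneg p hp1 hp2
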